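/- Let (q_t, p_t) solve the underdamped gradient flow q' = p, p' = −∇Φ̄(q) − αp, where Φ̄ ∈ C¹ satisfies (x − θ*)·∇Φ̄(x)/2 ≥ λ(Φ̄(x) − Φ̄(θ*) + α²‖x − θ*‖²/4) for some λ ∈ (0, 1/4]. Then ‖p_t‖² + ‖q_t − θ*‖² ≤ C_{α,λ} e^{−αλt} V(q₀, p₀), where C_{α,λ} = 4 + 8/(α²(1 − 2λ)) and V is the Lyapunov function V(x,y) = Φ̄(x) − Φ̄(θ*) + (α²/4)(‖x − θ* + α⁻¹y‖² + ‖α⁻¹y‖² − λ‖x − θ*‖²). -/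

import Mathlib

/-!
Along the flow `dV/dt = -(α/2)(⟪q - θ*, ∇Φ̄ q⟫ + ‖p‖² + λα⟪q - θ*, p⟫)`, which the assumed
inequality bounds by `-αλ V`; so `V` decays like `e^{-αλt}` by Grönwall. For the lower bound, the
assumed inequality and the minimality of `θ*` give, by integrating along rays from `θ*`, the
quadratic growth `Φ̄ x - Φ̄ θ* ≥ λα²‖x - θ*‖²/4`. Hence `4V(x, y) ≥ ‖α(x - θ*) + y‖² + ‖y‖²`,
which controls both `‖y‖²` and `α²‖x - θ*‖²`.
-/

open RealInnerProductSpace Real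

lemma le_exp_mul_of_hasDerivAt_le_neg_mul {g g' : ℝ → ℝ} {c : ℝ}
    (hg : ∀ t, HasDerivAt g (g' t) t) (hbound : ∀ t, g' t ≤ -c * g t) {t : ℝ} (ht : 0 ≤ t) :
    g t ≤ exp (-(c * t)) * g 0 := by
  have hanti : Antitone fun s => g s * exp (c * s) := by
    refine antitone_of_hasDerivAt_nonpos
      (fun s => (hg s).mul (((hasDerivAt_id s).const_mul c).exp)) fun s => ?_
    have hs := mul_le_mul_of_nonneg_left (hbound s) (exp_pos (c * s)).le
    simp only [Pi.zero_apply, id, mul_one]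
    linarith
  have h := hanti ht
  simp only [mul_zero, exp_zero, mul_one] at h
  calc g t = exp (-(c * t)) * (g t * exp (c * t)) := by
        rw [mul_left_comm, ← exp_add, neg_add_cancel, exp_zero, mul_one]
    _ ≤ exp (-(c * t)) * g 0 := mul_le_mul_of_nonneg_left h (exp_pos _).le

section InnerProductSpace

variable {E : Type*} [NormedAddCommGroup E] [InnerProductSpace ℝ E]

lemma DifferentiableAt.hasDerivAt_comp_inner_gradient [CompleteSpace E] {f : E → ℝ}
    {c : ℝ → E} {c' : E} {t : ℝ} (hf : DifferentiableAt ℝ f (c t)) (hc : HasDerivAt c c' t) :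
    HasDerivAt (fun s => f (c s)) ⟪gradient f (c t), c'⟫ t :=
  (hasGradientAt_iff_hasFDerivAt.mp hf.hasGradientAt).comp_hasDerivAt t hc

theorem mul_sq_norm_sub_le_sub_of_le_inner_gradient [CompleteSpace E] {f : E → ℝ}
    (hf : Differentiable ℝ f) {x₀ : E} {c : ℝ}
    (h : ∀ x, 2 * c * ‖x - x₀‖ ^ 2 ≤ ⟪x - x₀, gradient f x⟫) (x : E) :
    c * ‖x - x₀‖ ^ 2 ≤ f x - f x₀ := by
  set u := x - x₀
  set ψ : ℝ → ℝ := fun r => f (x₀ + r • u) - c * r ^ 2 * ‖u‖ ^ 2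
  have hψ : ∀ r, HasDerivAt ψ (⟪gradient f (x₀ + r • u), u⟫ - c * (2 * r) * ‖u‖ ^ 2) r := by
    intro r
    have hline : HasDerivAt (fun r : ℝ => x₀ + r • u) u r := by
      simpa using ((hasDerivAt_id r).smul_const u).const_add x₀
    exact ((hf _).hasDerivAt_comp_inner_gradient hline).sub
      (by simpa using ((hasDerivAt_pow 2 r).const_mul c).mul_const (‖u‖ ^ 2))
  have hmono : MonotoneOn ψ (Set.Ici 0) := by
    refine monotoneOn_of_hasDerivWithinAt_nonneg (convex_Ici 0)
      (fun r _ => (hψ r).continuousAt.continuousWithinAt) (fun r _ => (hψ r).hasDerivWithinAt)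
      fun r hr => ?_
    rw [interior_Ici, Set.mem_Ioi] at hr
    have hr' := h (x₀ + r • u)
    rw [add_sub_cancel_left, real_inner_smul_left, norm_smul, norm_of_nonneg hr.le] at hr'
    have : c * (2 * r) * ‖u‖ ^ 2 ≤ ⟪gradient f (x₀ + r • u), u⟫ := by
      rw [real_inner_comm]
      nlinarith
    linarith
  have h01 := hmono (Set.mem_Ici.mpr le_rfl) (zero_le_one' ℝ) zero_le_one
  simp only [ψ, zero_smul, add_zero, one_smul, add_sub_cancel, ne_eq, OfNat.ofNat_ne_zero,
    not_false_eq_true, zero_pow, mul_zero, zero_mul, sub_zero, one_pow, mul_one, u] at h01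
  linarith

variable (Φ : E → ℝ) (θ : E) (α lam : ℝ)

noncomputable def underdampedLyapunov (x y : E) : ℝ :=
  Φ x - Φ θ + α ^ 2 / 4 * (‖x - θ + α⁻¹ • y‖ ^ 2 + ‖α⁻¹ • y‖ ^ 2 - lam * ‖x - θ‖ ^ 2)

variable {Φ θ α lam}

lemma underdampedLyapunov_eq (hα : α ≠ 0) (x y : E) :
    underdampedLyapunov Φ θ α lam x y = Φ x - Φ θ + α ^ 2 * (1 - lam) / 4 * ‖x - θ‖ ^ 2
      + α / 2 * ⟪x - θ, y⟫ + ‖y‖ ^ 2 / 2 := by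
  simp only [underdampedLyapunov, norm_add_sq_real, real_inner_smul_right, norm_smul,
    norm_inv, norm_eq_abs, mul_pow, inv_pow, sq_abs]
  field_simp
  ring

lemma sq_norm_add_sq_norm_le_four_mul_underdampedLyapunov (hα : α ≠ 0) {x : E}
    (hgrow : lam * α ^ 2 / 4 * ‖x - θ‖ ^ 2 ≤ Φ x - Φ θ) (y : E) :
    ‖α • (x - θ) + y‖ ^ 2 + ‖y‖ ^ 2 ≤ 4 * underdampedLyapunov Φ θ α lam x y := by
  rw [underdampedLyapunov_eq hα, norm_add_sq_real, real_inner_smul_left, norm_smul,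
    norm_eq_abs, mul_pow, sq_abs]
  linarith

lemma underdampedLyapunov_nonneg (hα : α ≠ 0) {x : E}
    (hgrow : lam * α ^ 2 / 4 * ‖x - θ‖ ^ 2 ≤ Φ x - Φ θ) (y : E) :
    0 ≤ underdampedLyapunov Φ θ α lam x y := by
  have := sq_norm_add_sq_norm_le_four_mul_underdampedLyapunov hα hgrow y
  linarith [sq_nonneg ‖α • (x - θ) + y‖, sq_nonneg ‖y‖]

lemma sq_norm_add_sq_norm_sub_le_mul_underdampedLyapunov (hα : α ≠ 0) {x : E}
    (hgrow : lam * α ^ 2 / 4 * ‖x - θ‖ ^ 2 ≤ Φ x - Φ θ) (y : E) :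
    ‖y‖ ^ 2 + ‖x - θ‖ ^ 2 ≤ (4 + 8 / α ^ 2) * underdampedLyapunov Φ θ α lam x y := by
  have hV := sq_norm_add_sq_norm_le_four_mul_underdampedLyapunov hα hgrow y
  have hx : α ^ 2 * ‖x - θ‖ ^ 2 ≤ 8 * underdampedLyapunov Φ θ α lam x y := by
    have := (pow_le_pow_left₀ (norm_nonneg _) (norm_sub_le (α • (x - θ) + y) y) 2).trans
      add_sq_le
    rw [add_sub_cancel_right, norm_smul, norm_eq_abs, mul_pow, sq_abs] at this
    linarith
  have hx' : ‖x - θ‖ ^ 2 ≤ 8 / α ^ 2 * underdampedLyapunov Φ θ α lam x y := by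
    rw [div_mul_eq_mul_div, le_div_iff₀' (by positivity)]
    exact hx
  rw [add_mul]
  linarith [sq_nonneg ‖α • (x - θ) + y‖]

lemma hasDerivAt_underdampedLyapunov [CompleteSpace E] (hα : α ≠ 0) {q p : ℝ → E} {t : ℝ}
    (hΦ : DifferentiableAt ℝ Φ (q t)) (hq : HasDerivAt q (p t) t)
    (hp : HasDerivAt p (-(gradient Φ (q t)) - α • p t) t) :
    HasDerivAt (fun t => underdampedLyapunov Φ θ α lam (q t) (p t))
      (-(α / 2) * (⟪q t - θ, gradient Φ (q t)⟫ + ‖p t‖ ^ 2 + lam * α * ⟪q t - θ, p t⟫)) t := by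
  have hΦq := hΦ.hasDerivAt_comp_inner_gradient hq
  have hu := hq.sub_const θ
  have hw := hp.const_smul α⁻¹
  have hsq : ∀ {c : ℝ → E} {c' : E}, HasDerivAt c c' t →
      HasDerivAt (fun s => ‖c s‖ ^ 2) (2 * ⟪c t, c'⟫) t := fun h => by
    simpa only [real_inner_self_eq_norm_sq, real_inner_comm _ (_ : E), ← two_mul] using
      h.inner ℝ h
  refine (((hΦq.sub_const (Φ θ)).add ((((hsq (hu.add hw)).add (hsq hw)).sub
    ((hsq hu).const_mul lam)).const_mul (α ^ 2 / 4)))).congr_deriv ?_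
  simp only [Pi.add_apply, Pi.smul_apply, inner_add_left, inner_add_right, inner_sub_right,
    inner_neg_right, real_inner_smul_left, real_inner_smul_right, real_inner_self_eq_norm_sq,
    real_inner_comm (p t) (gradient Φ (q t))]
  field_simp
  ring

lemma dissipation_le_neg_mul_underdampedLyapunov (hα : 0 < α) (hlam₀ : 0 ≤ lam)
    (hlam₁ : lam ≤ 1) {x g : E}
    (hx : lam * (Φ x - Φ θ + α ^ 2 * ‖x - θ‖ ^ 2 / 4) ≤ ⟪x - θ, g⟫ / 2) (y : E) :
    -(α / 2) * (⟪x - θ, g⟫ + ‖y‖ ^ 2 + lam * α * ⟪x - θ, y⟫)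
      ≤ -(α * lam) * underdampedLyapunov Φ θ α lam x y := by
  rw [underdampedLyapunov_eq hα.ne']
  -- the `⟪x - θ, y⟫` terms cancel; the rest is `α • hx` plus two nonnegative terms
  nlinarith [mul_le_mul_of_nonneg_left hx hα.le, mul_nonneg (mul_nonneg hlam₀ hlam₀)
    (mul_nonneg (pow_nonneg hα.le 3) (sq_nonneg ‖x - θ‖)),
    mul_nonneg (mul_nonneg hα.le (sub_nonneg.mpr hlam₁)) (sq_nonneg ‖y‖)]

end InnerProductSpace

/-- Exponential convergence of position and velocity of the underdamped gradient flow. -/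
theorem stmt5 {K : ℕ} (Φ : EuclideanSpace ℝ (Fin K) → ℝ) (α lam : ℝ)
    (hα : 0 < α) (hlam : lam ∈ Set.Ioc (0 : ℝ) (1 / 4))
    (hC1 : ContDiff ℝ 1 Φ)
    (θs : EuclideanSpace ℝ (Fin K)) (hmin : ∀ x, Φ θs ≤ Φ x)
    (hass : ∀ x, lam * (Φ x - Φ θs + α ^ 2 * ‖x - θs‖ ^ 2 / 4)
      ≤ ⟪x - θs, gradient Φ x⟫ / 2)
    (q p : ℝ → EuclideanSpace ℝ (Fin K))
    (hq : ∀ t, HasDerivAt q (p t) t)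
    (hp : ∀ t, HasDerivAt p (-(gradient Φ (q t)) - α • p t) t)
    (V : EuclideanSpace ℝ (Fin K) → EuclideanSpace ℝ (Fin K) → ℝ)
    (hV : ∀ x y, V x y = Φ x - Φ θs
      + α ^ 2 / 4 * (‖x - θs + α⁻¹ • y‖ ^ 2 + ‖α⁻¹ • y‖ ^ 2 - lam * ‖x - θs‖ ^ 2)) :
    ∀ t ≥ (0 : ℝ), ‖p t‖ ^ 2 + ‖q t - θs‖ ^ 2
      ≤ (4 + 8 / (α ^ 2 * (1 - 2 * lam))) * Real.exp (-(α * lam * t)) * V (q 0) (p 0) := by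
  intro t ht
  obtain ⟨hlam₀, hlam₄⟩ := hlam
  obtain rfl : V = underdampedLyapunov Φ θs α lam := funext₂ hV
  have hΦ := hC1.differentiable one_ne_zero
  have hgrow (x) : lam * α ^ 2 / 4 * ‖x - θs‖ ^ 2 ≤ Φ x - Φ θs :=
    mul_sq_norm_sub_le_sub_of_le_inner_gradient hΦ
      (fun x => by nlinarith [hass x, mul_nonneg hlam₀.le (sub_nonneg.mpr (hmin x))]) x
  have hdecay := le_exp_mul_of_hasDerivAt_le_neg_mul
    (fun s => hasDerivAt_underdampedLyapunov hα.ne' (hΦ _) (hq s) (hp s))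
    (fun s => dissipation_le_neg_mul_underdampedLyapunov hα hlam₀.le (by linarith) (hass _) _) ht
  have hlam₂ : 0 < 1 - 2 * lam := by linarith
  have hconst : 4 + 8 / α ^ 2 ≤ 4 + 8 / (α ^ 2 * (1 - 2 * lam)) := by
    gcongr
    exact mul_le_of_le_one_right (by positivity) (by linarith)
  calc ‖p t‖ ^ 2 + ‖q t - θs‖ ^ 2
      ≤ (4 + 8 / α ^ 2) * underdampedLyapunov Φ θs α lam (q t) (p t) :=
        sq_norm_add_sq_norm_sub_le_mul_underdampedLyapunov hα.ne' (hgrow _) _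
    _ ≤ (4 + 8 / (α ^ 2 * (1 - 2 * lam))) * underdampedLyapunov Φ θs α lam (q t) (p t) :=
        mul_le_mul_of_nonneg_right hconst (underdampedLyapunov_nonneg hα.ne' (hgrow _) _)
    _ ≤ _ := by
        rw [mul_assoc]
        exact mul_le_mul_of_nonneg_left hdecay (by positivity)
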